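/- In the comonad PR_k, the comultiplication δ_A : PR_k A → PR_k PR_k A defined as the coextension of the identity satisfies the comonad laws: PR_k(δ_A) ∘ δ_A = δ_{PR_k A} ∘ δ_A, PR_k(ε_A) ∘ δ_A = id, and ε_{PR_k A} ∘ δ_A = id. Explicitly, for s = [(p_1,a_1),...,(p_n,a_n)], δ_A(s,i) = ([(p_1,(s,1)),...,(p_n,(s,n))], i). -/

import Mathlib

/-- A relational signature: a type of relation symbols with arities. -/
structure Signature where
  symb : Type
  ar : symb → ℕ

/-- A σ-structure: a universe with interpretations of the relation symbols. -/
structure Struct (σ : Signature) where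
  carrier : Type
  rel : ∀ r : σ.symb, (Fin (σ.ar r) → carrier) → Prop

/-- σ-homomorphism. -/
def Hom {σ : Signature} (A B : Struct σ) (f : A.carrier → B.carrier) : Prop :=
  ∀ r x, A.rel r x → B.rel r (fun j => f (x j))

/-- Sequences of pebble placements. -/
abbrev PSeq (k : ℕ) (α : Type) := List (Fin k × α)

/-- Universe of PR_k A: a play together with an index into it. -/
def PRW (k : ℕ) (α : Type) : Type := { p : PSeq k α × ℕ // p.2 < p.1.length }

def eltOf {k : ℕ} {α : Type} (w : PRW k α) : α := (w.1.1.get ⟨w.1.2, w.2⟩).2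
def pebOf {k : ℕ} {α : Type} (w : PRW k α) : Fin k := (w.1.1.get ⟨w.1.2, w.2⟩).1

/-- The pebble p (placed at position i) does not reoccur at positions i+1,...,m of s. -/
def NoReoccur {k : ℕ} {α : Type} (s : PSeq k α) (i m : ℕ) (p : Fin k) : Prop :=
  ∀ l (h : l < s.length), i < l → l ≤ m → (s.get ⟨l, h⟩).1 ≠ p

/-- The pebble-relation construction PR_k on σ-structures. -/
def PR {σ : Signature} (k : ℕ) (A : Struct σ) : Struct σ where
  carrier := PRW k A.carrier
  rel r x :=
    (∀ j j', (x j).1.1 = (x j').1.1) ∧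
    (∀ j j', NoReoccur (x j).1.1 (x j).1.2 (x j').1.2 (pebOf (x j))) ∧
    A.rel r (fun j => eltOf (x j))

/-- Counit ε(s,i) = a_i. -/
def counit {k : ℕ} {α : Type} (w : PRW k α) : α := eltOf w

/-- Coextension f*(s,i) = (t,i) with same pebbles and j-th element f(s,j). -/
def coext {k : ℕ} {α β : Type} (f : PRW k α → β) (w : PRW k α) : PRW k β :=
  ⟨(List.ofFn (fun j : Fin w.1.1.length => ((w.1.1.get j).1, f ⟨(w.1.1, j.1), j.2⟩)), w.1.2),
   by simpa using w.2⟩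

/-- Comultiplication δ = (id)*. -/
def comult {k : ℕ} {α : Type} : PRW k α → PRW k (PRW k α) := coext id

/-- Functor action PR_k f = (f ∘ ε)*. -/
def PRmap {k : ℕ} {α β : Type} (f : α → β) : PRW k α → PRW k β :=
  coext (f ∘ counit)

/-! The three laws reduce to the coKleisli laws `ε ∘ f* = f`, `ε* = id`,
`g* ∘ f* = (g ∘ f*)*` and their consequence `PR_k g ∘ f* = (g ∘ f)*`:
`PR_k δ ∘ δ = δ* = δ ∘ δ`, `PR_k ε ∘ δ = ε* = id`, `ε ∘ δ = id`. -/

section Coext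

variable {k : ℕ} {α β γ : Type}

theorem counit_coext (f : PRW k α → β) (w : PRW k α) : counit (coext f w) = f w := by
  obtain ⟨⟨s, i⟩, h⟩ := w
  simp [counit, coext, eltOf]

theorem coext_counit : coext (counit : PRW k α → α) = id := by
  funext w
  apply Subtype.ext
  simp [coext, counit, eltOf]

theorem coext_comp_coext (g : PRW k β → γ) (f : PRW k α → β) :
    coext g ∘ coext f = coext (g ∘ coext f) := by
  funext w
  apply Subtype.ext
  simp only [coext, Function.comp_apply, List.length_ofFn, List.get_eq_getElem,
    List.getElem_ofFn]
  rfl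

theorem prMap_comp_coext (g : β → γ) (f : PRW k α → β) :
    PRmap g ∘ coext f = coext (g ∘ f) := by
  rw [PRmap, coext_comp_coext, Function.comp_assoc]
  exact congrArg coext (funext fun w => congrArg g (counit_coext f w))

end Coext

/-- the comultiplication δ = (id)* of PR_k has the explicit form
δ(s,i) = ([(p_1,(s,1)),...,(p_n,(s,n))], i) and satisfies the comonad laws. -/
theorem pr_comult_laws (σ : Signature) (k : ℕ) (A : Struct σ) :
    (∀ w : PRW k A.carrier,
      (comult w).1 =
        (List.ofFn (fun j : Fin w.1.1.length =>
          ((w.1.1.get j).1, (⟨(w.1.1, j.1), j.2⟩ : PRW k A.carrier))), w.1.2)) ∧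
    PRmap (comult : PRW k A.carrier → PRW k (PRW k A.carrier)) ∘ comult =
      (comult : PRW k (PRW k A.carrier) → PRW k (PRW k (PRW k A.carrier))) ∘ comult ∧
    PRmap (counit : PRW k A.carrier → A.carrier) ∘ comult = id ∧
    (counit ∘ (comult : PRW k A.carrier → PRW k (PRW k A.carrier))) = id := by
  refine ⟨fun w => rfl, ?_, ?_, ?_⟩
  · unfold comult
    rw [prMap_comp_coext, coext_comp_coext, Function.comp_id, Function.id_comp]
  · unfold comult
    rw [prMap_comp_coext, Function.comp_id, coext_counit]
  · exact funext (counit_coext id)
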